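/- The homomorphism φ induces an isomorphism of localizations A_𝔪 → C_𝔫; that is, φ satisfies φ^{−1}(𝔫) = 𝔪 and the induced ring homomorphism from the localization of A at the maximal ideal 𝔪 to the localization of C at the maximal ideal 𝔫 is bijective. -/

import Mathlib

/-!
Setup: `A = ℂ[x_i, y_i : i ∈ ℕ]` is the polynomial ring in countably many pairs
of variables (`x_i = X (Sum.inl i)`, `y_i = X (Sum.inr i)`).
`P = ℂ[t_i, u_i : i ∈ ℕ]` and `C' = ℂ[t_i^{±1}, u_i]` is the localization of `P`
at the multiplicative set generated by the `t_i`.  `phi : A → C'` is the unique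
ℂ-algebra homomorphism with `phi(x_i) = t_i` and `phi(y_i) = t_i⁻¹ + u_i`.
`mIdeal` is the maximal ideal of `A` generated by the `x_i − 1` and `y_i − 1`,
and `nIdeal` is the maximal ideal of `C'` generated by the `t_i − 1` and `u_i`.
(The statement presupposes that these two ideals are maximal, hence prime; this
is recorded via the instance hypotheses.)
-/

noncomputable section

open MvPolynomial

/-- `A = ℂ[x_i, y_i : i ≥ 1]`. -/
abbrev A : Type := MvPolynomial (ℕ ⊕ ℕ) ℂ

/-- `P = ℂ[t_i, u_i : i ≥ 1]` (`t_i = X (Sum.inl i)`, `u_i = X (Sum.inr i)`). -/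
abbrev P : Type := MvPolynomial (ℕ ⊕ ℕ) ℂ

/-- The multiplicative set generated by the `t_i`. -/
def T : Submonoid P :=
  Submonoid.closure (Set.range fun i : ℕ => (X (Sum.inl i) : P))

/-- `C' = ℂ[t_i^{±1}, u_i : i ≥ 1]`, the localization of `P` at the `t_i`. -/
abbrev C' : Type := Localization T

/-- The inverse `t_i⁻¹` in `C'`. -/
def tInv (i : ℕ) : C' :=
  Localization.mk 1 ⟨X (Sum.inl i), Submonoid.subset_closure (Set.mem_range_self i)⟩

/-- `phi : A → C'`, the unique ℂ-algebra homomorphism with `phi(x_i) = t_i`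
and `phi(y_i) = t_i⁻¹ + u_i`. -/
def phi : A →+* C' :=
  eval₂Hom ((algebraMap P C').comp (MvPolynomial.C)) fun j =>
    match j with
    | Sum.inl i => algebraMap P C' (X (Sum.inl i))
    | Sum.inr i => tInv i + algebraMap P C' (X (Sum.inr i))

/-- The maximal ideal `𝔪 = (x_i − 1, y_i − 1 : i ≥ 1)` of `A`. -/
def mIdeal : Ideal A := Ideal.span (Set.range fun j : ℕ ⊕ ℕ => (X j : A) - 1)

/-- The maximal ideal `𝔫 = (t_i − 1, u_i : i ≥ 1)` of `C'`. -/
def nIdeal : Ideal C' :=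
  Ideal.span ((Set.range fun i : ℕ => algebraMap P C' (X (Sum.inl i)) - 1) ∪
    (Set.range fun i : ℕ => algebraMap P C' (X (Sum.inr i))))

/-!
Since `x_i ∉ 𝔪`, each `x_i` is a unit in `A_𝔪`, so `t_i ↦ x_i`, `u_i ↦ y_i - x_i⁻¹` defines
`phiInv : C' → A_𝔪` with `phiInv ∘ φ = (A → A_𝔪)`, and after localizing at `𝔫` also
`φ_𝔫 ∘ phiInv = (C' → C'_𝔫)`. As `φ_𝔫` is a local homomorphism, the second identity forces
`phiInv` to invert every element outside `𝔫`, so `phiInv` extends to an inverse of `φ_𝔫`.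
The equality `𝔪 = φ⁻¹(𝔫)` holds because `𝔪` is maximal, being the kernel of evaluation at `1`.
-/

namespace MvPolynomial

variable {R σ : Type*} [CommRing R]

theorem sub_C_eval_mem_span_X_sub_C (f : σ → R) (p : MvPolynomial σ R) :
    p - C (eval f p) ∈ Ideal.span (Set.range fun i => X i - C (f i)) := by
  induction p using MvPolynomial.induction_on with
  | C c => simp
  | add p q hp hq =>
    convert add_mem hp hq using 1
    simp only [map_add]; ring
  | mul_X p i hp =>
    have h : p * X i - C (eval f (p * X i)) =
        p * (X i - C (f i)) + (p - C (eval f p)) * C (f i) := by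
      simp only [map_mul, eval_X]; ring
    rw [h]
    exact add_mem (Ideal.mul_mem_left _ _ (Ideal.subset_span ⟨i, rfl⟩))
      (Ideal.mul_mem_right _ _ hp)

theorem ker_eval_eq_span_X_sub_C (f : σ → R) :
    RingHom.ker (eval f) = Ideal.span (Set.range fun i => (X i : MvPolynomial σ R) - C (f i)) := by
  refine le_antisymm (fun p hp => ?_) ?_
  · simpa [(RingHom.mem_ker).mp hp] using sub_C_eval_mem_span_X_sub_C f p
  · rw [Ideal.span_le]
    rintro _ ⟨i, rfl⟩
    simp

end MvPolynomial

namespace Localization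

variable {R S : Type*} [CommSemiring R] [CommSemiring S] {p : Ideal R} [p.IsPrime]
  {q : Ideal S} [q.IsPrime] {f : R →+* S}

theorem localRingHom_bijective_of_comp_eq (hpq : p = q.comap f) (g : S →+* Localization.AtPrime p)
    (hgf : g.comp f = algebraMap R _) (hfg : (localRingHom p q f hpq).comp g = algebraMap S _) :
    Function.Bijective (localRingHom p q f hpq) := by
  set Φ := localRingHom p q f hpq
  have hg : ∀ s : q.primeCompl, IsUnit (g s) := fun s =>
    isUnit_of_map_unit Φ _ (by rw [← RingHom.comp_apply, hfg]; exact IsLocalization.map_units _ s)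
  let Ψ : Localization.AtPrime q →+* Localization.AtPrime p := IsLocalization.lift hg
  have hΨΦ : Ψ.comp Φ = RingHom.id _ :=
    IsLocalization.ringHom_ext p.primeCompl <| RingHom.ext fun r => by
    change Ψ (Φ (algebraMap R _ r)) = algebraMap R _ r
    rw [localRingHom_to_map, IsLocalization.lift_eq, ← RingHom.comp_apply, hgf]
  have hΦΨ : Φ.comp Ψ = RingHom.id _ :=
    IsLocalization.ringHom_ext q.primeCompl <| RingHom.ext fun s => by
    change Φ (Ψ (algebraMap S _ s)) = algebraMap S _ s
    rw [IsLocalization.lift_eq, ← RingHom.comp_apply, hfg]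
  exact Function.bijective_iff_has_inverse.mpr
    ⟨Ψ, fun x => congr($hΨΦ x), fun x => congr($hΦΨ x)⟩

end Localization

theorem mIdeal_eq_ker_eval : mIdeal = RingHom.ker (eval fun _ => (1 : ℂ) : A →+* ℂ) := by
  rw [ker_eval_eq_span_X_sub_C, mIdeal, map_one]

instance mIdeal_isMaximal : mIdeal.IsMaximal := by
  rw [mIdeal_eq_ker_eval]
  exact RingHom.ker_isMaximal_of_surjective _ fun r => ⟨C r, eval_C r⟩

theorem X_notMem_mIdeal (j : ℕ ⊕ ℕ) : (X j : A) ∉ mIdeal := by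
  simp [mIdeal_eq_ker_eval]

theorem tInv_mul_X (i : ℕ) : tInv i * algebraMap P C' (X (Sum.inl i)) = 1 := by
  simpa [tInv, Localization.mk_eq_mk'] using IsLocalization.mk'_spec C' (1 : P)
    (⟨X (Sum.inl i), Submonoid.subset_closure (Set.mem_range_self i)⟩ : T)

@[simp]
theorem phi_C (r : ℂ) : phi (C r) = algebraMap P C' (C r) := by
  simp [phi]

@[simp]
theorem phi_X_inl (i : ℕ) : phi (X (Sum.inl i)) = algebraMap P C' (X (Sum.inl i)) := by
  simp [phi]

@[simp]
theorem phi_X_inr (i : ℕ) : phi (X (Sum.inr i)) = tInv i + algebraMap P C' (X (Sum.inr i)) := by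
  simp [phi]

theorem mIdeal_le_comap_phi : mIdeal ≤ nIdeal.comap phi := by
  have ht (i : ℕ) : algebraMap P C' (X (Sum.inl i)) - 1 ∈ nIdeal :=
    Ideal.subset_span (Or.inl ⟨i, rfl⟩)
  have hu (i : ℕ) : algebraMap P C' (X (Sum.inr i)) ∈ nIdeal :=
    Ideal.subset_span (Or.inr ⟨i, rfl⟩)
  rw [mIdeal, Ideal.span_le]
  rintro _ ⟨i | i, rfl⟩ <;> rw [SetLike.mem_coe, Ideal.mem_comap, map_sub, map_one]
  · rw [phi_X_inl]
    exact ht i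
  · have h : tInv i + algebraMap P C' (X (Sum.inr i)) - 1 =
        algebraMap P C' (X (Sum.inr i)) - tInv i * (algebraMap P C' (X (Sum.inl i)) - 1) := by
      rw [mul_sub, tInv_mul_X]; ring
    rw [phi_X_inr, h]
    exact sub_mem (hu i) (Ideal.mul_mem_left _ _ (ht i))

theorem mIdeal_eq_comap_phi [nIdeal.IsPrime] : mIdeal = nIdeal.comap phi :=
  mIdeal_isMaximal.eq_of_le Ideal.IsPrime.ne_top' mIdeal_le_comap_phi

def xInv (i : ℕ) : Localization.AtPrime mIdeal :=
  IsLocalization.mk' _ 1 (⟨X (Sum.inl i), X_notMem_mIdeal _⟩ : mIdeal.primeCompl)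

def phiInvPoly : P →+* Localization.AtPrime mIdeal :=
  eval₂Hom ((algebraMap A _).comp C)
    (Sum.elim (fun i => algebraMap A _ (X (Sum.inl i)))
      fun i => algebraMap A _ (X (Sum.inr i)) - xInv i)

theorem T_le_comap_phiInvPoly : T ≤ (IsUnit.submonoid _).comap phiInvPoly :=
  Submonoid.closure_le.mpr <| by
    rintro _ ⟨i, rfl⟩
    simpa [phiInvPoly, IsUnit.mem_submonoid_iff] using
      IsLocalization.map_units _ (⟨X (Sum.inl i), X_notMem_mIdeal _⟩ : mIdeal.primeCompl)

def phiInv : C' →+* Localization.AtPrime mIdeal :=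
  IsLocalization.lift (M := T) fun t => T_le_comap_phiInvPoly t.2

theorem phiInv_algebraMap (p : P) : phiInv (algebraMap P C' p) = phiInvPoly p :=
  IsLocalization.lift_eq _ _

theorem phiInv_tInv (i : ℕ) : phiInv (tInv i) = xInv i := by
  rw [xInv, IsLocalization.eq_mk'_iff_mul_eq, map_one]
  simpa [phiInv_algebraMap, phiInvPoly] using congr(phiInv $(tInv_mul_X i))

theorem phiInv_comp_phi : phiInv.comp phi = algebraMap A _ := by
  refine MvPolynomial.ringHom_ext (fun r => ?_) fun j => ?_
  · simp [phiInv_algebraMap, phiInvPoly]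
  · rcases j with i | i <;> simp [phiInv_algebraMap, phiInvPoly, phiInv_tInv]

theorem localRingHom_comp_phiInv [nIdeal.IsPrime] :
    (Localization.localRingHom mIdeal nIdeal phi mIdeal_eq_comap_phi).comp phiInv =
      algebraMap C' _ := by
  have hxInv (i : ℕ) : Localization.localRingHom mIdeal nIdeal phi mIdeal_eq_comap_phi (xInv i) =
      algebraMap C' (Localization.AtPrime nIdeal) (tInv i) := by
    rw [xInv, Localization.localRingHom_mk', map_one, eq_comm, IsLocalization.eq_mk'_iff_mul_eq,
      ← map_mul]
    simp [tInv_mul_X]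
  refine IsLocalization.ringHom_ext T <| MvPolynomial.ringHom_ext (fun r => ?_) fun j => ?_
  · simp [phiInv_algebraMap, phiInvPoly, Localization.localRingHom_to_map]
  · rcases j with i | i
    · simp [phiInv_algebraMap, phiInvPoly, Localization.localRingHom_to_map]
    · simp only [RingHom.comp_apply, phiInv_algebraMap, phiInvPoly, eval₂Hom_X', Sum.elim_inr,
        map_sub, Localization.localRingHom_to_map, phi_X_inr, map_add, hxInv]
      ring

/-- `phi` satisfies `phi⁻¹(𝔫) = 𝔪` and induces an isomorphism
`A_𝔪 → C'_𝔫` on localizations. -/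
theorem phi_localization_isomorphism
    [hm : mIdeal.IsPrime] [hn : nIdeal.IsPrime] :
    ∃ h : mIdeal = Ideal.comap phi nIdeal,
      Function.Bijective (Localization.localRingHom mIdeal nIdeal phi h) :=
  ⟨mIdeal_eq_comap_phi,
    Localization.localRingHom_bijective_of_comp_eq _ phiInv phiInv_comp_phi localRingHom_comp_phiInv⟩

end
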